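/- For 0 < α ≤ 1 let p_α(z) = 4αz / (1 − z + √((1 − z)² + 4αz))² be the Pick function on the unit disk U (with the branch of the square root equal to 1 at z = 0). Then p_α has angular limit 1 at the boundary point 1 and finite angular derivative 1/√α at 1; in particular |p_α'(0)| = α = 1/(p_α'(1))², so p_α attains equality in the bound |φ'(0)| ≥ 1/β² for injective holomorphic self-maps φ of U with φ(0) = 0, angular limit 1 and angular derivative β at the boundary point 1. -/

import Mathlib

open Complex Set Filter Finset

noncomputable section

/-- The open unit disk in the complex plane. -/
def unitDisk : Set ℂ := {z : ℂ | ‖z‖ < 1}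

/-- A Stolz angle at a boundary point `ζ` with opening parameter `k > 1`. -/
def stolzAngle (ζ : ℂ) (k : ℝ) : Set ℂ :=
  {z | z ∈ unitDisk ∧ ‖z - ζ‖ < k * (1 - ‖z‖)}

/-- `φ` has angular limit `L` at the boundary point `ζ`: `φ z → L` as `z → ζ`
within every Stolz angle at `ζ`. -/
def HasAngularLimit (φ : ℂ → ℂ) (ζ L : ℂ) : Prop :=
  ∀ k : ℝ, 1 < k → Tendsto φ (nhdsWithin ζ (stolzAngle ζ k)) (nhds L)

/-- `φ` has finite angular limit `L` and finite angular derivative `β` at the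
boundary point `ζ`. -/
def HasAngularDerivAt (φ : ℂ → ℂ) (ζ L β : ℂ) : Prop :=
  HasAngularLimit φ ζ L ∧
  ∀ k : ℝ, 1 < k →
    Tendsto (fun z => (φ z - L) / (z - ζ)) (nhdsWithin ζ (stolzAngle ζ k)) (nhds β)

/-!
Put `d = 1 - z + s z`. The relation `s² = (1 - z)² + 4αz` gives `(1 - p) d = 2 (1 - z)`, hence
the Koebe relation `k(p z) = α k(z)` for `k(z) = z / (1 - z)²`. Injectivity of `p` follows from
injectivity of `k` on the disk. Also, `k` omits `(-∞, -1/4]` on the disk, while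
`k(w) = -1/|1 - w|² ≤ -1/4` on the unit circle minus `1`; so with `α ≤ 1`, `|p| ≠ 1` on the disk,
and connectedness together with `p 0 = 0` gives `|p| < 1`.

On the disk `s²` lies in the slit plane, so `Re s ≠ 0`, and `s 0 = 1` forces `Re s > 0`. Hence
`s` is the principal square root and tends to `2√α` at `1`, and the slope `(p z - 1)/(z - 1)`,
which equals `2 / d`, tends to `1/√α`.
-/

open Topology

theorem IsPreconnected.forall_lt_of_forall_ne {X : Type*} [TopologicalSpace X] {S : Set X}
    (hS : IsPreconnected S) {g : X → ℝ} (hg : ContinuousOn g S) {a : X} {c : ℝ} (ha : a ∈ S)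
    (hga : g a < c) (hne : ∀ x ∈ S, g x ≠ c) : ∀ x ∈ S, g x < c := by
  intro x hx
  by_contra! hcx
  obtain ⟨y, hy, hyc⟩ := hS.intermediate_value ha hx hg ⟨hga.le, hcx⟩
  exact hne y hy hyc

lemma unitDisk_eq_ball : unitDisk = Metric.ball (0 : ℂ) 1 := by
  ext z; simp [unitDisk]

lemma isOpen_unitDisk : IsOpen unitDisk := unitDisk_eq_ball ▸ Metric.isOpen_ball

lemma isPreconnected_unitDisk : IsPreconnected unitDisk := by
  rw [unitDisk_eq_ball]; exact (convex_ball 0 1).isPreconnected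

lemma zero_mem_unitDisk : (0 : ℂ) ∈ unitDisk := by simp [unitDisk]

lemma one_notMem_unitDisk : (1 : ℂ) ∉ unitDisk := by simp [unitDisk]

lemma re_lt_one_of_mem_unitDisk {z : ℂ} (hz : z ∈ unitDisk) : z.re < 1 :=
  (re_le_norm z).trans_lt hz

lemma re_sq_add_im_sq_lt_one {z : ℂ} (hz : z ∈ unitDisk) : z.re ^ 2 + z.im ^ 2 < 1 := by
  have hz' : ‖z‖ ^ 2 < 1 := by simpa using pow_lt_one₀ (norm_nonneg z) hz two_ne_zero
  rwa [← normSq_eq_norm_sq, normSq_apply, ← sq, ← sq] at hz'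

lemma neg_quarter_lt_of_eq_mul_one_sub_sq {z : ℂ} (hz : z ∈ unitDisk) {r : ℝ}
    (h : z = r * (1 - z) ^ 2) : -1 / 4 < r := by
  have hxy := re_sq_add_im_sq_lt_one hz
  have hre := congrArg re h
  have him := congrArg im h
  simp only [mul_re, mul_im, ofReal_re, ofReal_im, sq, sub_re, sub_im, one_re, one_im] at hre him
  by_contra! hr
  rcases eq_or_ne z.im 0 with hy | hy
  · rw [hy] at hre hxy
    nlinarith [sq_nonneg (1 + z.re)]
  · have h1 : 1 = -2 * r * (1 - z.re) := mul_right_cancel₀ hy (by linarith)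
    nlinarith

lemma eq_of_mul_one_sub_sq_eq {z w : ℂ} (hz : z ∈ unitDisk) (hw : w ∈ unitDisk)
    (h : z * (1 - w) ^ 2 = w * (1 - z) ^ 2) : z = w := by
  have hzw : z * w ≠ 1 := by
    intro h1
    have : ‖z * w‖ < 1 := by
      rw [norm_mul]; exact mul_lt_one_of_nonneg_of_lt_one_left (norm_nonneg z) hz hw.le
    simp [h1] at this
  have hfac : (z - w) * (1 - z * w) = 0 := by linear_combination h
  exact sub_eq_zero.1 ((mul_eq_zero.1 hfac).resolve_right (sub_ne_zero.2 (Ne.symm hzw)))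

lemma eq_neg_inv_mul_one_sub_sq_of_norm_eq_one {w : ℂ} (hw : ‖w‖ = 1) (hw1 : w ≠ 1) :
    w = ((-1 / ‖1 - w‖ ^ 2 : ℝ) : ℂ) * (1 - w) ^ 2 := by
  have hw0 : w ≠ 0 := by rintro rfl; simp at hw
  have hN : ((‖1 - w‖ ^ 2 : ℝ) : ℂ) = (1 - w) * (1 - w⁻¹) := by
    rw [inv_eq_conj hw, ofReal_pow, ← mul_conj', map_sub, map_one]
  have hN0 : (1 - w) * (1 - w⁻¹) ≠ 0 :=
    mul_ne_zero (sub_ne_zero.2 (Ne.symm hw1)) (sub_ne_zero.2 (by simpa [eq_comm] using hw1))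
  rw [ofReal_div, hN, ofReal_neg, ofReal_one, div_mul_eq_mul_div, eq_div_iff hN0]
  field_simp
  ring

lemma norm_ne_one_of_mul_one_sub_sq_eq {α : ℝ} (hα0 : 0 < α) (hα1 : α ≤ 1) {z w : ℂ}
    (hz : z ∈ unitDisk) (hw1 : w ≠ 1) (h : w * (1 - z) ^ 2 = α * z * (1 - w) ^ 2) :
    ‖w‖ ≠ 1 := by
  intro hw
  set r : ℝ := -1 / ‖1 - w‖ ^ 2 with hr
  have hpos : 0 < ‖1 - w‖ := norm_pos_iff.2 (sub_ne_zero.2 (Ne.symm hw1))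
  have hle : ‖1 - w‖ ≤ 2 := by
    calc ‖1 - w‖ ≤ ‖(1 : ℂ)‖ + ‖w‖ := norm_sub_le 1 w
      _ = 2 := by rw [hw]; norm_num
  have hr4 : r ≤ -1 / 4 := by
    rw [hr, neg_div, neg_div, neg_le_neg_iff]
    exact one_div_le_one_div_of_le (by positivity) (by nlinarith)
  have hw1' : (1 - w) ^ 2 ≠ 0 := pow_ne_zero 2 (sub_ne_zero.2 (Ne.symm hw1))
  have hzr : z = (r / α : ℝ) * (1 - z) ^ 2 := by
    have hαC : (α : ℂ) ≠ 0 := ofReal_ne_zero.2 hα0.ne'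
    have hwr : w = r * (1 - w) ^ 2 := eq_neg_inv_mul_one_sub_sq_of_norm_eq_one hw hw1
    push_cast
    field_simp
    exact mul_left_cancel₀ hw1' (by linear_combination (1 - z) ^ 2 * hwr - h)
  have := neg_quarter_lt_of_eq_mul_one_sub_sq hz hzr
  rw [lt_div_iff₀ hα0] at this
  nlinarith

lemma one_sub_sq_add_mem_slitPlane {α : ℝ} (hα0 : 0 < α) (hα1 : α ≤ 1) {z : ℂ}
    (hz : z ∈ unitDisk) : (1 - z) ^ 2 + 4 * (α : ℂ) * z ∈ slitPlane := by
  have hxy := re_sq_add_im_sq_lt_one hz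
  rw [mem_slitPlane_iff]
  by_contra! hc
  obtain ⟨hre, him⟩ := hc
  simp only [add_re, add_im, mul_re, mul_im, ofReal_re, ofReal_im, sq, sub_re, sub_im, one_re,
    one_im, re_ofNat, im_ofNat] at hre him
  rcases eq_or_ne z.im 0 with hy | hy
  · rw [hy] at hre hxy
    nlinarith [sq_nonneg (1 + z.re), mul_nonneg (sub_nonneg.2 hα1) (sq_nonneg (1 - z.re))]
  · have hx : z.re = 1 - 2 * α := mul_right_cancel₀ hy (by linarith)
    nlinarith

lemma re_ne_zero_of_sq_mem_slitPlane {w : ℂ} (hw : w ^ 2 ∈ slitPlane) : w.re ≠ 0 := by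
  intro h
  rw [mem_slitPlane_iff] at hw
  simp [sq, h] at hw
  nlinarith [sq_nonneg w.im]

lemma injOn_of_mul_one_sub_sq_eq {f : ℂ → ℂ} {c : ℂ} (hc : c ≠ 0)
    (hf1 : ∀ z ∈ unitDisk, f z ≠ 1)
    (hf : ∀ z ∈ unitDisk, f z * (1 - z) ^ 2 = c * z * (1 - f z) ^ 2) : InjOn f unitDisk := by
  intro z hz w hw hzw
  have hcf : c * (1 - f w) ^ 2 ≠ 0 := mul_ne_zero hc (pow_ne_zero 2 (sub_ne_zero.2 (hf1 w hw).symm))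
  have hfz := hf z hz
  rw [hzw] at hfz
  refine eq_of_mul_one_sub_sq_eq hz hw (mul_left_cancel₀ hcf ?_)
  linear_combination (1 - z) ^ 2 * hf w hw - (1 - w) ^ 2 * hfz

lemma mapsTo_of_mul_one_sub_sq_eq {f : ℂ → ℂ} {α : ℝ} (hα0 : 0 < α) (hα1 : α ≤ 1)
    (hfc : ContinuousOn f unitDisk) (hf0 : f 0 = 0) (hf1 : ∀ z ∈ unitDisk, f z ≠ 1)
    (hf : ∀ z ∈ unitDisk, f z * (1 - z) ^ 2 = α * z * (1 - f z) ^ 2) :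
    MapsTo f unitDisk unitDisk :=
  isPreconnected_unitDisk.forall_lt_of_forall_ne (g := fun z => ‖f z‖) hfc.norm
    zero_mem_unitDisk (by simp [hf0])
    (fun z hz => norm_ne_one_of_mul_one_sub_sq_eq hα0 hα1 hz (hf1 z hz) (hf z hz))

lemma hasAngularDerivAt_of_tendsto_nhdsWithin_unitDisk {φ : ℂ → ℂ} {ζ L β : ℂ}
    (hζ : ζ ∉ unitDisk)
    (h : Tendsto (fun z => (φ z - L) / (z - ζ)) (𝓝[unitDisk] ζ) (𝓝 β)) :
    HasAngularDerivAt φ ζ L β := by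
  have hlim : Tendsto φ (𝓝[unitDisk] ζ) (𝓝 L) := by
    have hsub : Tendsto (fun z => z - ζ) (𝓝[unitDisk] ζ) (𝓝 0) :=
      tendsto_nhdsWithin_of_tendsto_nhds (by simpa using (continuous_sub_right ζ).tendsto ζ)
    have := (hsub.mul h).const_add L
    rw [zero_mul, add_zero] at this
    refine this.congr' ?_
    filter_upwards [self_mem_nhdsWithin] with z hz
    have : z - ζ ≠ 0 := sub_ne_zero.2 (ne_of_mem_of_not_mem hz hζ)
    field_simp
    ring
  have hmono : ∀ k, 𝓝[stolzAngle ζ k] ζ ≤ 𝓝[unitDisk] ζ := fun k =>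
    nhdsWithin_mono ζ fun z hz => hz.1
  exact ⟨fun k _ => hlim.mono_left (hmono k), fun k _ => h.mono_left (hmono k)⟩

lemma ne_one_of_one_sub_mul_eq {w d z : ℂ} (hz : z ∈ unitDisk) (h : (1 - w) * d = 2 * (1 - z)) :
    w ≠ 1 := by
  rintro rfl
  have hz1 : 1 - z ≠ 0 := sub_ne_zero.2 (ne_of_mem_of_not_mem hz one_notMem_unitDisk).symm
  rw [sub_self, zero_mul, eq_comm] at h
  exact mul_ne_zero two_ne_zero hz1 h

lemma hasDerivAt_id_mul_zero {g : ℂ → ℂ} (hg : DifferentiableAt ℂ g 0) :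
    HasDerivAt (fun z => z * g z) (g 0) 0 := by
  simpa using (hasDerivAt_id' (0 : ℂ)).fun_mul hg.hasDerivAt

lemma one_sub_add_ne_zero {z w : ℂ} (hz : z ∈ unitDisk) (hw : 0 < w.re) : 1 - z + w ≠ 0 := by
  intro h
  have := congrArg re h
  simp only [add_re, sub_re, one_re, zero_re] at this
  linarith [re_lt_one_of_mem_unitDisk hz]

lemma one_sub_div_sq_mul_eq {a z w : ℂ} (hw : w ^ 2 = (1 - z) ^ 2 + 4 * a * z)
    (hd : 1 - z + w ≠ 0) : (1 - 4 * a * z / (1 - z + w) ^ 2) * (1 - z + w) = 2 * (1 - z) := by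
  field_simp
  linear_combination hw

lemma div_sq_mul_one_sub_sq_eq {a z w : ℂ} (hw : w ^ 2 = (1 - z) ^ 2 + 4 * a * z)
    (hd : 1 - z + w ≠ 0) :
    4 * a * z / (1 - z + w) ^ 2 * (1 - z) ^ 2 = a * z * (1 - 4 * a * z / (1 - z + w) ^ 2) ^ 2 := by
  have h := one_sub_div_sq_mul_eq hw hd
  set P := 4 * a * z / (1 - z + w) ^ 2
  have hP : P * (1 - z + w) ^ 2 = 4 * a * z := div_mul_cancel₀ _ (pow_ne_zero 2 hd)
  refine mul_right_cancel₀ (pow_ne_zero 2 hd) ?_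
  linear_combination (1 - z) ^ 2 * hP - a * z * ((1 - P) * (1 - z + w) + 2 * (1 - z)) * h

lemma hasAngularDerivAt_one_of_one_sub_mul_eq {f d : ℂ → ℂ} {c : ℂ} (hc : c ≠ 0)
    (hd0 : ∀ z ∈ unitDisk, d z ≠ 0) (hfd : ∀ z ∈ unitDisk, (1 - f z) * d z = 2 * (1 - z))
    (hd : Tendsto d (𝓝[unitDisk] 1) (𝓝 c)) : HasAngularDerivAt f 1 1 (2 / c) := by
  refine hasAngularDerivAt_of_tendsto_nhdsWithin_unitDisk one_notMem_unitDisk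
    ((tendsto_const_nhds.div hd hc).congr' ?_)
  filter_upwards [self_mem_nhdsWithin] with z hz
  have hz1 : z - 1 ≠ 0 := sub_ne_zero.2 (ne_of_mem_of_not_mem hz one_notMem_unitDisk)
  rw [Pi.div_apply, div_eq_div_iff (hd0 z hz) hz1]
  linear_combination hfd z hz

section Pick

variable {α : ℝ} {s : ℂ → ℂ}

lemma re_pos_of_sq_eq (hα0 : 0 < α) (hα1 : α ≤ 1) (hs : ContinuousOn s unitDisk)
    (hs0 : s 0 = 1) (hssq : ∀ z ∈ unitDisk, s z ^ 2 = (1 - z) ^ 2 + 4 * (α : ℂ) * z) :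
    ∀ z ∈ unitDisk, 0 < (s z).re := by
  have := isPreconnected_unitDisk.forall_lt_of_forall_ne (g := fun z => -(s z).re) (c := 0)
    (continuous_re.comp_continuousOn hs).neg zero_mem_unitDisk (by simp [hs0])
    (fun z hz => neg_ne_zero.2 (re_ne_zero_of_sq_mem_slitPlane
      (hssq z hz ▸ one_sub_sq_add_mem_slitPlane hα0 hα1 hz)))
  exact fun z hz => neg_neg_iff_pos.1 (this z hz)

lemma tendsto_nhdsWithin_unitDisk_one_of_sq_eq (hα0 : 0 < α)
    (hre : ∀ z ∈ unitDisk, 0 < (s z).re)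
    (hssq : ∀ z ∈ unitDisk, s z ^ 2 = (1 - z) ^ 2 + 4 * (α : ℂ) * z) :
    Tendsto s (𝓝[unitDisk] 1) (𝓝 (2 * Real.sqrt α : ℝ)) := by
  set q : ℂ → ℂ := fun z => (1 - z) ^ 2 + 4 * (α : ℂ) * z
  have hq1 : q 1 = ((2 * Real.sqrt α : ℝ) : ℂ) ^ 2 := by
    simp only [q]; push_cast
    rw [mul_pow, ← ofReal_pow, Real.sq_sqrt hα0.le]; ring
  have hroot : q 1 ^ (2⁻¹ : ℂ) = ((2 * Real.sqrt α : ℝ) : ℂ) := by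
    rw [hq1, sq_cpow_two_inv]; simpa using Real.sqrt_pos.2 hα0
  have hcont : ContinuousAt (fun z => q z ^ (2⁻¹ : ℂ)) 1 := by
    refine (continuousAt_cpow_const ?_).comp (by fun_prop : Continuous q).continuousAt
    rw [hq1, ← ofReal_pow]; exact ofReal_mem_slitPlane.2 (by positivity)
  refine ((hroot ▸ hcont.tendsto).mono_left nhdsWithin_le_nhds).congr' ?_
  filter_upwards [self_mem_nhdsWithin] with z hz
  rw [← sq_cpow_two_inv (hre z hz), hssq z hz]

lemma hasAngularDerivAt_one_of_sq_eq {p : ℂ → ℂ} (hα0 : 0 < α)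
    (hre : ∀ z ∈ unitDisk, 0 < (s z).re)
    (hssq : ∀ z ∈ unitDisk, s z ^ 2 = (1 - z) ^ 2 + 4 * (α : ℂ) * z)
    (hp1 : ∀ z ∈ unitDisk, (1 - p z) * (1 - z + s z) = 2 * (1 - z)) :
    HasAngularDerivAt p 1 1 ((1 / Real.sqrt α : ℝ) : ℂ) := by
  have hd1 : Tendsto (fun z => 1 - z + s z) (𝓝[unitDisk] 1) (𝓝 (2 * Real.sqrt α : ℝ)) := by
    have h1z : Tendsto (fun z : ℂ => 1 - z) (𝓝[unitDisk] 1) (𝓝 0) :=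
      tendsto_nhdsWithin_of_tendsto_nhds (by simpa using (continuous_sub_left (1 : ℂ)).tendsto 1)
    simpa using h1z.add (tendsto_nhdsWithin_unitDisk_one_of_sq_eq hα0 hre hssq)
  have hsqrt : ((Real.sqrt α : ℝ) : ℂ) ≠ 0 := ofReal_ne_zero.2 (Real.sqrt_pos.2 hα0).ne'
  convert hasAngularDerivAt_one_of_one_sub_mul_eq (by push_cast; simp [hsqrt])
    (fun z hz => one_sub_add_ne_zero hz (hre z hz)) hp1 hd1 using 1
  push_cast
  field_simp

end Pick

/-- **The Pick function is extremal for the one-point bound.** For `0 < α ≤ 1`,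
the Pick function `p_α(z) = 4αz/(1 − z + s z)²` (with `s` the branch of
`√((1 − z)² + 4αz)` equal to `1` at `0`) has angular limit `1` and finite
angular derivative `1/√α` at the boundary point `1`; moreover
`|p_α'(0)| = α = 1/(p_α'(1))²`, i.e. `p_α` attains equality in the bound
`|φ'(0)| ≥ 1/β²`. -/
theorem pick_function_attains_equality
    (α : ℝ) (hα0 : 0 < α) (hα1 : α ≤ 1)
    (s : ℂ → ℂ) (hs : DifferentiableOn ℂ s unitDisk) (hs0 : s 0 = 1)
    (hssq : ∀ z ∈ unitDisk, (s z) ^ 2 = (1 - z) ^ 2 + 4 * (α : ℂ) * z)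
    (p : ℂ → ℂ) (hp : ∀ z, p z = 4 * (α : ℂ) * z / (1 - z + s z) ^ 2) :
    DifferentiableOn ℂ p unitDisk ∧
    InjOn p unitDisk ∧
    MapsTo p unitDisk unitDisk ∧
    p 0 = 0 ∧
    HasAngularDerivAt p 1 1 ((1 / Real.sqrt α : ℝ) : ℂ) ∧
    ‖deriv p 0‖ = α ∧
    α = 1 / (1 / Real.sqrt α) ^ 2 := by
  have hre := re_pos_of_sq_eq hα0 hα1 hs.continuousOn hs0 hssq
  have hd : ∀ z ∈ unitDisk, 1 - z + s z ≠ 0 := fun z hz => one_sub_add_ne_zero hz (hre z hz)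
  have hp1 : ∀ z ∈ unitDisk, (1 - p z) * (1 - z + s z) = 2 * (1 - z) := fun z hz => by
    rw [hp]; exact one_sub_div_sq_mul_eq (hssq z hz) (hd z hz)
  have hpne : ∀ z ∈ unitDisk, p z ≠ 1 := fun z hz => ne_one_of_one_sub_mul_eq hz (hp1 z hz)
  have hkoebe : ∀ z ∈ unitDisk, p z * (1 - z) ^ 2 = α * z * (1 - p z) ^ 2 := fun z hz => by
    rw [hp]; exact div_sq_mul_one_sub_sq_eq (hssq z hz) (hd z hz)
  set g : ℂ → ℂ := fun z => 4 * α / (1 - z + s z) ^ 2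
  have hpg : p = fun z => z * g z := funext fun z => by rw [hp]; ring
  have hg : DifferentiableOn ℂ g unitDisk := (differentiableOn_const _).div
    (((differentiableOn_const 1).sub differentiableOn_id).add hs |>.pow 2)
    fun z hz => pow_ne_zero 2 (hd z hz)
  have hpd : DifferentiableOn ℂ p unitDisk := hpg ▸ differentiableOn_id.mul hg
  have hp0 : p 0 = 0 := by simp [hp]
  refine ⟨hpd, injOn_of_mul_one_sub_sq_eq (ofReal_ne_zero.2 hα0.ne') hpne hkoebe,
    mapsTo_of_mul_one_sub_sq_eq hα0 hα1 hpd.continuousOn hp0 hpne hkoebe, hp0,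
    hasAngularDerivAt_one_of_sq_eq hα0 hre hssq hp1, ?_, ?_⟩
  · rw [hpg, (hasDerivAt_id_mul_zero (hg.differentiableAt
      (isOpen_unitDisk.mem_nhds zero_mem_unitDisk))).deriv]
    norm_num [g, hs0, abs_of_pos hα0]
  · rw [div_pow, one_pow, Real.sq_sqrt hα0.le, one_div_one_div]
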